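/- Left-shift version: with H as above, if v is nonzero, v·H is affine, and v_1 = v_{b+1} = 0, then the vector v'' obtained by shifting each half of v one position to the left also yields an affine component v''·H. -/
import Mathlib


/-- The binary Möbius transform, giving the ANF coefficients of `f`. -/
def moebius {n : ℕ} (f : (Fin n → ZMod 2) → ZMod 2) : (Fin n → ZMod 2) → ZMod 2 :=
  fun u => ∑ x ∈ Finset.univ.filter (fun x : Fin n → ZMod 2 => ∀ i, x i ≠ 0 → u i ≠ 0), f x

/-- The algebraic degree of a Boolean function. -/
def degB {n : ℕ} (f : (Fin n → ZMod 2) → ZMod 2) : ℕ :=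
  (Finset.univ.filter (fun u : Fin n → ZMod 2 => moebius f u ≠ 0)).sup
    (fun u => (Finset.univ.filter (fun i => u i ≠ 0)).card)

/-- A Boolean function is affine if it is of the form `x ↦ a·x ⊕ c`. -/
def IsAffine {n : ℕ} (g : (Fin n → ZMod 2) → ZMod 2) : Prop :=
  ∃ (a : Fin n → ZMod 2) (c : ZMod 2), ∀ x, g x = (∑ i, a i * x i) + c


private lemma shift_sum {N : ℕ} (a x τx a' : Fin (N + 1) → ZMod 2)
    (h0 : τx 0 = 0) (hs : ∀ i : Fin N, τx i.succ = x i.castSucc)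
    (ha' : ∀ i : Fin N, a' i.castSucc = a i.succ) (halast : a' (Fin.last N) = 0) :
    ∑ i, a i * τx i = ∑ i, a' i * x i := by
  rw [Fin.sum_univ_succ, Fin.sum_univ_castSucc, h0, halast, mul_zero, zero_mul,
    add_zero, zero_add]
  exact Finset.sum_congr rfl fun i _ => by rw [hs i, ha' i]

/-- Left-shift invariance of the linear components space of a superposition
S-box: if `v·H` is affine and the first coordinate of each half of `v` is zero,
then the vector `v''` obtained by shifting each half of `v` one position to the
left also yields an affine component `v''·H` (here `b = m + 1`). -/
theorem lcs_left_shift_invariant (m : ℕ)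
    (f g : (Fin (m + 2) → ZMod 2) → ZMod 2)
    (f' g' : (Fin m → ZMod 2) → ZMod 2)
    (hf : ∀ x, f x = x 0 + f' (fun i => x i.succ.castSucc) + x (Fin.last (m + 1)))
    (hg : ∀ x, g x = x 0 + g' (fun i => x i.succ.castSucc) + x (Fin.last (m + 1)))
    (hfdeg : 2 ≤ degB f) (hgdeg : 2 ≤ degB g)
    (H : (Fin ((m + 1) + (m + 1)) → ZMod 2) → Fin ((m + 1) + (m + 1)) → ZMod 2)
    (hH : ∀ x (i : Fin (m + 1)),
      H x (Fin.castAdd (m + 1) i) =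
        f (fun j : Fin (m + 2) => x ⟨i.val + j.val, by have := i.isLt; have := j.isLt; omega⟩) ∧
      H x (Fin.natAdd (m + 1) i) =
        g (fun j : Fin (m + 2) => x ⟨i.val + j.val, by have := i.isLt; have := j.isLt; omega⟩))
    (v : Fin ((m + 1) + (m + 1)) → ZMod 2) (hv : v ≠ 0)
    (hlin : IsAffine (fun x => ∑ i, v i * H x i))
    (hv1 : v (Fin.castAdd (m + 1) 0) = 0)
    (hvb1 : v (Fin.natAdd (m + 1) 0) = 0)
    (v'' : Fin ((m + 1) + (m + 1)) → ZMod 2)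
    (hv''L0 : v'' (Fin.castAdd (m + 1) (Fin.last m)) = 0)
    (hv''R0 : v'' (Fin.natAdd (m + 1) (Fin.last m)) = 0)
    (hv''L : ∀ i : Fin m, v'' (Fin.castAdd (m + 1) i.castSucc) = v (Fin.castAdd (m + 1) i.succ))
    (hv''R : ∀ i : Fin m, v'' (Fin.natAdd (m + 1) i.castSucc) = v (Fin.natAdd (m + 1) i.succ)) :
    IsAffine (fun x => ∑ i, v'' i * H x i) := by
  classical
  obtain ⟨a, c, ha⟩ := hlin
  set τ : (Fin ((m+1)+(m+1)) → ZMod 2) → (Fin ((m+1)+(m+1)) → ZMod 2) :=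
    fun x k => if h : k.val = 0 then 0 else x ⟨k.val - 1, by omega⟩ with hτ
  have key : ∀ x, ∑ i, v'' i * H x i = ∑ i, v i * H (τ x) i := by
    intro x
    rw [Fin.sum_univ_add (f := fun i : Fin ((m+1)+(m+1)) => v'' i * H x i),
        Fin.sum_univ_add (f := fun i : Fin ((m+1)+(m+1)) => v i * H (τ x) i)]
    congr 1
    · rw [Fin.sum_univ_castSucc
        (f := fun i : Fin (m+1) => v'' (Fin.castAdd (m+1) i) * H x (Fin.castAdd (m+1) i)),
        Fin.sum_univ_succ
        (f := fun i : Fin (m+1) => v (Fin.castAdd (m+1) i) * H (τ x) (Fin.castAdd (m+1) i)),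
        hv''L0, hv1, zero_mul, zero_mul, add_zero, zero_add]
      apply Finset.sum_congr rfl
      intro i _
      rw [hv''L i, (hH x i.castSucc).1, (hH (τ x) i.succ).1]
      refine congrArg _ (congrArg f (funext fun j => ?_))
      show x _ = dite _ _ _
      rw [dif_neg (show ¬(i.succ.val + j.val = 0) by simp [Fin.val_succ])]
      congr 1
      exact Fin.ext (by simp [Fin.val_succ])
    · rw [Fin.sum_univ_castSucc
        (f := fun i : Fin (m+1) => v'' (Fin.natAdd (m+1) i) * H x (Fin.natAdd (m+1) i)),
        Fin.sum_univ_succ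
        (f := fun i : Fin (m+1) => v (Fin.natAdd (m+1) i) * H (τ x) (Fin.natAdd (m+1) i)),
        hv''R0, hvb1, zero_mul, zero_mul, add_zero, zero_add]
      apply Finset.sum_congr rfl
      intro i _
      rw [hv''R i, (hH x i.castSucc).2, (hH (τ x) i.succ).2]
      refine congrArg _ (congrArg g (funext fun j => ?_))
      show x _ = dite _ _ _
      rw [dif_neg (show ¬(i.succ.val + j.val = 0) by simp [Fin.val_succ])]
      congr 1
      exact Fin.ext (by simp [Fin.val_succ])
  refine ⟨fun i => if h : i.val + 1 < (m+1)+(m+1) then a ⟨i.val+1, h⟩ else 0, c, ?_⟩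
  intro x
  show ∑ i, v'' i * H x i = _
  rw [key]
  refine (ha (τ x)).trans ?_
  congr 1
  refine shift_sum (N := m+1+m) a x (τ x)
    (fun i => if h : i.val + 1 < (m+1)+(m+1) then a ⟨i.val+1, h⟩ else 0) ?_ ?_ ?_ ?_
  · haveI : NeZero ((m+1)+(m+1)) := ⟨by omega⟩
    exact dif_pos (Fin.val_zero _)
  · intro i
    show dite _ _ _ = x i.castSucc
    rw [dif_neg (show ¬(i.succ.val = 0) by simp [Fin.val_succ])]
    exact congrArg x (Fin.ext (by simp [Fin.val_succ]))
  · intro i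
    show dite _ _ _ = a i.succ
    rw [dif_pos (show (i.castSucc.val + 1 < (m+1)+(m+1)) by
      simp only [Fin.coe_castSucc]; omega)]
    exact congrArg a (Fin.ext (by simp [Fin.val_succ]))
  · show dite _ _ _ = (0 : ZMod 2)
    rw [dif_neg (show ¬((Fin.last (m+1+m)).val + 1 < (m+1)+(m+1)) by
      simp only [Fin.val_last]; omega)]
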